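/- arXiv:2111.13045 — 2 statements merged into one kernel-verified Lean document; each statement's English description precedes it below -/
import Mathlib

section
/- Let -1 < λ ≤ 0, set θ = -λ + |1+λ|/2 ∈ (0,1), and let Θ = (1, θ, θ², …) ∈ ℓ². Then for A = λ·id + E one has ‖e^{tA} Θ‖₂ = e^{t|1+λ|/2} ‖Θ‖₂ for all t ∈ ℝ, so ‖e^{tA} Θ‖₂ → +∞ as t → +∞. In particular, for λ > -1 the system ẏ = Ay on ℓ² is not asymptotically stable. -/
open scoped ENNReal
open MeasureTheory Filter

noncomputable section

/-- The real Hilbert space `ℓ²` of square-summable real sequences. -/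
abbrev ell2 : Type := lp (fun _ : ℕ => ℝ) 2

lemma shift_memℓp (y : ell2) : Memℓp (fun n => y (n + 1)) 2 := by
  have h : Summable fun n : ℕ => ‖y n‖ ^ (2 : ℝ≥0∞).toReal :=
    (memℓp_gen_iff (by norm_num)).mp (lp.memℓp y)
  exact memℓp_gen (h.comp_injective (add_left_injective 1))

/-- The left shift operator `E : ℓ² → ℓ²`, `(Ey)ₙ = yₙ₊₁`. -/
def shiftE : ell2 →L[ℝ] ell2 :=
  LinearMap.mkContinuous
    { toFun := fun y => ⟨fun n => y (n + 1), shift_memℓp y⟩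
      map_add' := fun y z => by
        ext n
        simp [lp.coeFn_add]
        rfl
      map_smul' := fun c y => by
        ext n
        simp [lp.coeFn_smul] }
    1
    (fun y => by
      rw [one_mul]
      have h2 : (0:ℝ) < (2 : ℝ≥0∞).toReal := by norm_num
      have hy := lp.norm_rpow_eq_tsum h2 y
      have hEy := lp.norm_rpow_eq_tsum h2 (⟨fun n => y (n + 1), shift_memℓp y⟩ : ell2)
      have hle : (∑' n : ℕ, ‖y (n + 1)‖ ^ (2 : ℝ≥0∞).toReal)
          ≤ ∑' n : ℕ, ‖y n‖ ^ (2 : ℝ≥0∞).toReal := by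
        have hs : Summable fun n : ℕ => ‖y n‖ ^ (2 : ℝ≥0∞).toReal :=
          (memℓp_gen_iff h2).mp (lp.memℓp y)
        exact tsum_comp_le_tsum_of_inj hs (fun n => by positivity)
          (add_left_injective 1)
      have key : ‖(⟨fun n => y (n + 1), shift_memℓp y⟩ : ell2)‖ ^ (2 : ℝ≥0∞).toReal
          ≤ ‖y‖ ^ (2 : ℝ≥0∞).toReal := by
        rw [hy, hEy]; exact hle
      exact (Real.rpow_le_rpow_iff
        (norm_nonneg ((⟨fun n => y (n + 1), shift_memℓp y⟩ : ell2))) (norm_nonneg y) h2).mp key)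

/-- The operator `A = λ·id + E` on `ℓ²`. -/
def opA (lam : ℝ) : ell2 →L[ℝ] ell2 :=
  lam • ContinuousLinearMap.id ℝ ell2 + shiftE

/-!
Since `E Θ = θ Θ`, the sequence `Θ` is an eigenvector of `A` with eigenvalue
`λ + θ = |1 + λ| / 2 > 0`; summing the exponential series on it gives
`e^{tA} Θ = e^{t(λ + θ)} Θ`, which grows exponentially.
-/

theorem ContinuousLinearMap.exp_apply_of_apply_eq_smul {𝕜 E : Type*} [RCLike 𝕜]
    [NormedAddCommGroup E] [NormedSpace 𝕜 E] [CompleteSpace E]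
    {B : E →L[𝕜] E} {v : E} {c : 𝕜} (h : B v = c • v) :
    NormedSpace.exp B v = NormedSpace.exp c • v := by
  have hpow (n : ℕ) : (B ^ n) v = c ^ n • v := by
    induction n with
    | zero => simp
    | succ n ih => rw [pow_succ', mul_apply_eq_comp, ih, map_smul, h, smul_smul, pow_succ]
  have hB := (NormedSpace.exp_series_hasSum_exp' (𝕂 := 𝕜) B).mapL (apply 𝕜 E v)
  have hc := (NormedSpace.exp_series_hasSum_exp' (𝕂 := 𝕜) c).smul_const v
  simp only [apply_apply, smul_apply, hpow, smul_smul, smul_eq_mul] at hB hc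
  exact hB.unique hc

theorem memℓp_geometric {r : ℝ} (hr : |r| < 1) {p : ℝ≥0∞} (hp : 0 < p.toReal) :
    Memℓp (fun n : ℕ => r ^ n) p := by
  refine memℓp_gen ((summable_geometric_of_lt_one (by positivity)
    (Real.rpow_lt_one (abs_nonneg r) hr hp)).congr fun n => ?_)
  rw [norm_pow, Real.norm_eq_abs, ← Real.rpow_natCast, ← Real.rpow_mul (abs_nonneg r),
    ← Real.rpow_natCast, ← Real.rpow_mul (abs_nonneg r), mul_comm]

lemma shiftE_apply (y : ell2) (n : ℕ) : shiftE y n = y (n + 1) := rfl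

/-- `Θ = (1, θ, θ², …)`, indexed from `0` so that `Θ n = θ ^ n`. -/
def geometricSeq (θ : ℝ) (hθ : |θ| < 1) : ell2 :=
  ⟨fun n => θ ^ n, memℓp_geometric hθ (by norm_num)⟩

section geometricSeq

variable {θ : ℝ} (hθ : |θ| < 1)

@[simp] lemma geometricSeq_apply (n : ℕ) : geometricSeq θ hθ n = θ ^ n := rfl

lemma geometricSeq_ne_zero : geometricSeq θ hθ ≠ 0 := fun h => by
  simpa using congrArg (fun y : ell2 => y 0) h

lemma shiftE_geometricSeq : shiftE (geometricSeq θ hθ) = θ • geometricSeq θ hθ := by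
  ext n
  simp [shiftE_apply, pow_succ', lp.coeFn_smul]

lemma opA_geometricSeq (lam : ℝ) :
    opA lam (geometricSeq θ hθ) = (lam + θ) • geometricSeq θ hθ := by
  rw [opA, add_apply, shiftE_geometricSeq, add_smul]
  rfl

lemma norm_exp_smul_opA_geometricSeq (lam t : ℝ) :
    ‖NormedSpace.exp (t • opA lam) (geometricSeq θ hθ)‖
      = Real.exp (t * (lam + θ)) * ‖geometricSeq θ hθ‖ := by
  have heig : (t • opA lam) (geometricSeq θ hθ) = (t * (lam + θ)) • geometricSeq θ hθ := by
    rw [smul_apply, opA_geometricSeq, smul_smul]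
  rw [ContinuousLinearMap.exp_apply_of_apply_eq_smul heig, ← Real.exp_eq_exp_ℝ, norm_smul,
    Real.norm_of_nonneg (Real.exp_pos _).le]

end geometricSeq

/-- For `-1 < λ ≤ 0`, with `θ = -λ + |1+λ|/2 ∈ (0,1)` and `Θ = (1, θ, θ², …) ∈ ℓ²`,
one has `‖e^{tA} Θ‖₂ = e^{t|1+λ|/2} ‖Θ‖₂` for all `t`, so `‖e^{tA} Θ‖₂ → +∞` as
`t → +∞`; in particular for `λ > -1` the system `ẏ = Ay` is not asymptotically stable. -/
theorem stmt7 (lam : ℝ) (h1 : -1 < lam) (h2 : lam ≤ 0) :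
    (-lam + |1 + lam| / 2) ∈ Set.Ioo (0:ℝ) 1 ∧
    (∃ Θ : ell2, (∀ n : ℕ, Θ n = (-lam + |1 + lam| / 2) ^ n) ∧
      (∀ t : ℝ, ‖NormedSpace.exp (t • opA lam) Θ‖ =
        Real.exp (t * (|1 + lam| / 2)) * ‖Θ‖) ∧
      Tendsto (fun t : ℝ => ‖NormedSpace.exp (t • opA lam) Θ‖) atTop atTop) ∧
    ¬ (∀ y0 : ell2, Tendsto (fun t : ℝ => NormedSpace.exp (t • opA lam) y0)
        atTop (nhds 0)) := by
  set θ := -lam + |1 + lam| / 2 with hθ_def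
  have hθ : θ = (1 - lam) / 2 := by rw [hθ_def, abs_of_pos (by linarith : 0 < 1 + lam)]; ring
  have hθ_mem : θ ∈ Set.Ioo (0:ℝ) 1 := by constructor <;> linarith
  have hθ_abs : |θ| < 1 := abs_lt.mpr ⟨by linarith [hθ_mem.1], hθ_mem.2⟩
  have hrate : |1 + lam| / 2 = lam + θ := by rw [hθ_def]; ring
  set Θ := geometricSeq θ hθ_abs
  have hnorm (t : ℝ) :
      ‖NormedSpace.exp (t • opA lam) Θ‖ = Real.exp (t * (|1 + lam| / 2)) * ‖Θ‖ := by
    rw [hrate]; exact norm_exp_smul_opA_geometricSeq hθ_abs lam t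
  have hgrowth : Tendsto (fun t : ℝ => ‖NormedSpace.exp (t • opA lam) Θ‖) atTop atTop := by
    simp only [hnorm]
    refine (Real.tendsto_exp_atTop.comp (tendsto_id.atTop_mul_const ?_)).atTop_mul_const
      (norm_pos_iff.mpr (geometricSeq_ne_zero hθ_abs))
    rw [hrate]; linarith
  refine ⟨hθ_mem, ⟨Θ, geometricSeq_apply hθ_abs, hnorm, hgrowth⟩, fun hstable => ?_⟩
  exact not_tendsto_nhds_of_tendsto_atTop hgrowth 0 (by simpa using (hstable Θ).norm)

end
end

section
/- Combined stability criterion: for λ ∈ ℝ and A = λ·id + E on ℓ², the system ẏ = Ay is globally asymptotically stable (e^{tA} y₀ → 0 as t → +∞ for every y₀ ∈ ℓ²) if and only if λ ≤ -1. -/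
open scoped ENNReal
open MeasureTheory Filter

noncomputable section

/-!
For `t ≥ 0` we have `e^{tA} = e^{tλ} e^{tE}`, so `‖e^{tA}‖ ≤ e^{t(λ + ‖E‖)} ≤ e^{t(λ + 1)}`, and the
semigroup is uniformly bounded when `λ ≤ -1`. On a vector killed by some power `E^N` the series
for `e^{tE}` is finite, so `e^{tA} y` is `e^{tλ}` times a polynomial in `t` and decays; such vectors
(the finitely supported sequences) are dense in `ℓ²`, and uniform boundedness carries the decay to
all of `ℓ²`. Conversely, for `|μ| < 1` the geometric sequence `(μⁿ)` is an eigenvector of `E`; if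
`λ > -1`, then `μ = max (-λ) 0` makes it an eigenvector of `A` with eigenvalue `λ + μ ≥ 0`, whose
orbit does not decay.
-/

open NormedSpace Nat Topology

theorem NormedSpace.exp_smul_one_add {𝔸 : Type*} [NormedRing 𝔸] [NormedAlgebra ℝ 𝔸]
    [CompleteSpace 𝔸] (c : ℝ) (x : 𝔸) : exp (c • 1 + x) = Real.exp c • exp x := by
  have hball : ∀ z : 𝔸, z ∈ Metric.eball (0 : 𝔸) (expSeries ℝ 𝔸).radius := fun z =>
    (expSeries_radius_eq_top ℝ 𝔸).symm ▸ edist_lt_top _ _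
  rw [exp_add_of_commute_of_mem_ball (𝕂 := ℝ) ((Commute.one_left x).smul_left c) (hball _)
    (hball _), ← Algebra.algebraMap_eq_smul_one, ← algebraMap_exp_comm, Real.exp_eq_exp_ℝ,
    Algebra.smul_def]

theorem NormedSpace.norm_exp_le_exp_norm {𝔸 : Type*} [NormedRing 𝔸] [NormedAlgebra ℝ 𝔸]
    [CompleteSpace 𝔸] (h1 : ‖(1 : 𝔸)‖ ≤ 1) (x : 𝔸) : ‖exp x‖ ≤ Real.exp ‖x‖ := by
  have hpow : ∀ n : ℕ, ‖x ^ n‖ ≤ ‖x‖ ^ n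
    | 0 => by simpa using h1
    | n + 1 => norm_pow_le' x n.succ_pos
  have hterm : ∀ n : ℕ, ‖(n !⁻¹ : ℝ) • x ^ n‖ ≤ ‖x‖ ^ n / n ! := fun n => by
    rw [norm_smul, norm_inv, RCLike.norm_natCast, inv_mul_eq_div]
    gcongr
    exact hpow n
  rw [exp_eq_tsum ℝ, Real.exp_eq_exp_ℝ, exp_eq_tsum_div]
  exact (norm_tsum_le_tsum_norm (norm_expSeries_summable' x)).trans
    ((norm_expSeries_summable' x).tsum_le_tsum hterm (Real.summable_pow_div_factorial _))

namespace ContinuousLinearMap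

variable {E : Type*} [NormedAddCommGroup E] [NormedSpace ℝ E] [CompleteSpace E]

theorem exp_apply_eq_sum_of_pow_apply_eq_zero {T : E →L[ℝ] E} {y : E} {N : ℕ}
    (h : (T ^ N) y = 0) : exp T y = ∑ k ∈ Finset.range N, (k !⁻¹ : ℝ) • (T ^ k) y := by
  refine ((apply ℝ E y).hasSum (exp_series_hasSum_exp' (𝕂 := ℝ) T)).unique
    (hasSum_sum_of_ne_finset_zero fun k hk => ?_)
  obtain ⟨m, rfl⟩ := Nat.exists_eq_add_of_le' (not_lt.mp (Finset.mem_range.not.mp hk))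
  simp [pow_add, h]

theorem exp_apply_of_apply_eq_smul_s8 {T : E →L[ℝ] E} {y : E} {c : ℝ} (h : T y = c • y) :
    exp T y = Real.exp c • y := by
  have hker : ((T - c • (1 : E →L[ℝ] E)) ^ 1) y = 0 := by simp [h]
  rw [← add_sub_cancel (c • (1 : E →L[ℝ] E)) T, exp_smul_one_add, smul_apply,
    exp_apply_eq_sum_of_pow_apply_eq_zero hker]
  simp

theorem norm_exp_smul_smul_one_add_le (c t : ℝ) (T : E →L[ℝ] E) (ht : 0 ≤ t) :
    ‖exp (t • (c • 1 + T))‖ ≤ Real.exp (t * (c + ‖T‖)) := by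
  rw [smul_add, smul_smul, exp_smul_one_add, norm_smul, Real.norm_of_nonneg (Real.exp_pos _).le,
    mul_add, Real.exp_add]
  gcongr
  refine (norm_exp_le_exp_norm norm_id_le _).trans ?_
  rw [norm_smul, Real.norm_of_nonneg ht]

theorem tendsto_exp_smul_smul_one_add_apply_of_pow_apply_eq_zero {c : ℝ} (hc : c < 0)
    {T : E →L[ℝ] E} {y : E} {N : ℕ} (h : (T ^ N) y = 0) :
    Tendsto (fun t : ℝ => exp (t • (c • 1 + T)) y) atTop (𝓝 0) := by
  have hexp : ∀ t : ℝ, exp (t • (c • 1 + T)) y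
      = ∑ k ∈ Finset.range N, (t ^ k / Real.exp (-c * t) / k !) • (T ^ k) y := fun t => by
    have htN : ((t • T) ^ N) y = 0 := by rw [smul_pow, smul_apply, h, smul_zero]
    rw [smul_add, smul_smul, exp_smul_one_add, smul_apply,
      exp_apply_eq_sum_of_pow_apply_eq_zero htN, Finset.smul_sum]
    refine Finset.sum_congr rfl fun k _ => ?_
    rw [smul_pow, smul_apply, smul_smul, smul_smul, neg_mul, Real.exp_neg, mul_comm t c,
      div_inv_eq_mul]
    congr 1
    ring
  have hcoeff : ∀ k : ℕ, Tendsto (fun t : ℝ => t ^ k / Real.exp (-c * t) / k !) atTop (𝓝 0) :=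
    fun k => by
      simpa using ((isLittleO_pow_exp_pos_mul_atTop k (neg_pos.mpr hc)).tendsto_div_nhds_zero
        ).div_const (k ! : ℝ)
  simp_rw [hexp]
  simpa using tendsto_finsetSum (Finset.range N) fun k _ => (hcoeff k).smul_const ((T ^ k) y)

theorem not_tendsto_exp_smul_apply_of_apply_eq_smul {T : E →L[ℝ] E} {y : E} {c : ℝ}
    (hc : 0 ≤ c) (hy : y ≠ 0) (h : T y = c • y) :
    ¬Tendsto (fun t : ℝ => exp (t • T) y) atTop (𝓝 0) := by
  intro htends
  have hgrow : ∀ t : ℝ, 0 ≤ t → ‖y‖ ≤ ‖exp (t • T) y‖ := fun t ht => by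
    rw [exp_apply_of_apply_eq_smul_s8 (c := t * c) (by rw [smul_apply, h, smul_smul]), norm_smul,
      Real.norm_of_nonneg (Real.exp_pos _).le]
    exact le_mul_of_one_le_left (norm_nonneg y) (Real.one_le_exp (mul_nonneg ht hc))
  have hypos : ‖(0 : E)‖ < ‖y‖ := by rwa [norm_zero, norm_pos_iff]
  obtain ⟨t, ht0, hlt⟩ :=
    ((eventually_ge_atTop 0).and (htends.norm.eventually_lt_const hypos)).exists
  exact (hgrow t ht0).not_gt (by simpa using hlt)

end ContinuousLinearMap

theorem ContinuousLinearMap.tendsto_apply_of_dense {𝕜 ι E F : Type*} [NontriviallyNormedField 𝕜]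
    [NormedAddCommGroup E] [NormedSpace 𝕜 E] [NormedAddCommGroup F] [NormedSpace 𝕜 F]
    {l : Filter ι} {f : ι → E →L[𝕜] F} {C : ℝ} (hC : ∀ᶠ i in l, ‖f i‖ ≤ C) {s : Set E}
    (hs : Dense s) (h : ∀ z ∈ s, Tendsto (fun i => f i z) l (𝓝 0)) (y : E) :
    Tendsto (fun i => f i y) l (𝓝 0) := by
  rw [Metric.tendsto_nhds]
  intro ε hε
  have hnear : IsOpen {z : E | C * ‖y - z‖ < ε / 2} :=
    isOpen_lt (continuous_const.mul (continuous_const.sub continuous_id).norm) continuous_const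
  obtain ⟨z, hzs, hz⟩ := hs.exists_mem_open hnear ⟨y, by simpa using half_pos hε⟩
  filter_upwards [hC, Metric.tendsto_nhds.mp (h z hzs) (ε / 2) (half_pos hε)] with i hCi hzi
  rw [_root_.dist_zero_right] at hzi ⊢
  calc ‖f i y‖ ≤ ‖f i (y - z)‖ + ‖f i z‖ := by
        simpa using norm_add_le (f i (y - z)) (f i z)
    _ ≤ C * ‖y - z‖ + ‖f i z‖ := by
        gcongr
        exact ((f i).le_opNorm _).trans (by gcongr)
    _ < ε := by linarith [show C * ‖y - z‖ < ε / 2 from hz]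

theorem shiftE_pow_apply (k : ℕ) (y : ell2) (n : ℕ) : (shiftE ^ k) y n = y (n + k) := by
  induction k generalizing y with
  | zero => rfl
  | succ k ih => rw [pow_succ]; exact ih (shiftE y)

theorem norm_shiftE_le_one : ‖shiftE‖ ≤ 1 :=
  LinearMap.mkContinuous_norm_le _ zero_le_one _

theorem dense_setOf_exists_shiftE_pow_apply_eq_zero :
    Dense {z : ell2 | ∃ N, (shiftE ^ N) z = 0} := fun y => by
  refine mem_closure_of_tendsto (lp.hasSum_single ENNReal.ofNat_ne_top y).tendsto_sum_nat
    (Eventually.of_forall fun N => ⟨N, ?_⟩)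
  rw [map_sum]
  refine Finset.sum_eq_zero fun i hi => lp.ext (funext fun n => ?_)
  rw [shiftE_pow_apply, lp.single_apply_ne _ _ _ (by grind)]
  rfl

theorem exists_ne_zero_shiftE_eq_smul {μ : ℝ} (hμ : |μ| < 1) :
    ∃ y : ell2, y ≠ 0 ∧ shiftE y = μ • y := by
  have hsummable : Summable fun n : ℕ => ‖μ ^ n‖ ^ (2 : ℝ≥0∞).toReal := by
    have hsq : ∀ n : ℕ, ‖μ ^ n‖ ^ (2 : ℝ≥0∞).toReal = (μ ^ 2) ^ n := fun n => by
      rw [ENNReal.toReal_ofNat, Real.rpow_two, Real.norm_eq_abs, sq_abs, ← pow_mul, ← pow_mul,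
        mul_comm]
    simp_rw [hsq]
    exact summable_geometric_of_lt_one (sq_nonneg μ) (by nlinarith [abs_nonneg μ, sq_abs μ])
  refine ⟨⟨fun n => μ ^ n, memℓp_gen hsummable⟩, fun h0 => ?_, lp.ext (funext fun n => ?_)⟩
  · simpa using congrArg (fun y : ell2 => y 0) h0
  · change μ ^ (n + 1) = μ * μ ^ n
    ring

theorem opA_eq_smul_one_add (lam : ℝ) : opA lam = lam • 1 + shiftE := rfl

theorem norm_exp_smul_opA_le_one {lam t : ℝ} (hlam : lam ≤ -1) (ht : 0 ≤ t) :
    ‖exp (t • opA lam)‖ ≤ 1 := by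
  refine (ContinuousLinearMap.norm_exp_smul_smul_one_add_le lam t shiftE ht).trans ?_
  rw [Real.exp_le_one_iff]
  nlinarith [norm_shiftE_le_one]

theorem tendsto_exp_smul_opA_apply {lam : ℝ} (hlam : lam ≤ -1) (y : ell2) :
    Tendsto (fun t : ℝ => exp (t • opA lam) y) atTop (𝓝 0) :=
  ContinuousLinearMap.tendsto_apply_of_dense
    ((eventually_ge_atTop 0).mono fun _ ht => norm_exp_smul_opA_le_one hlam ht)
    dense_setOf_exists_shiftE_pow_apply_eq_zero
    (fun _ ⟨_, hN⟩ => ContinuousLinearMap.tendsto_exp_smul_smul_one_add_apply_of_pow_apply_eq_zero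
      (by linarith) hN) y

theorem exists_not_tendsto_exp_smul_opA_apply {lam : ℝ} (hlam : -1 < lam) :
    ∃ y : ell2, ¬Tendsto (fun t : ℝ => exp (t • opA lam) y) atTop (𝓝 0) := by
  obtain ⟨y, hy, hEy⟩ := exists_ne_zero_shiftE_eq_smul (μ := max (-lam) 0)
    (by rw [abs_of_nonneg (le_max_right _ _)]; exact max_lt (by linarith) one_pos)
  refine ⟨y, ContinuousLinearMap.not_tendsto_exp_smul_apply_of_apply_eq_smul
    (c := lam + max (-lam) 0) (by linarith [le_max_left (-lam) 0]) hy ?_⟩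
  rw [opA_eq_smul_one_add, add_apply, hEy, smul_apply, one_apply_eq_self, add_smul]

/-- Stability criterion: the system `ẏ = Ay`, `A = λ·id + E` on `ℓ²`, is globally
asymptotically stable if and only if `λ ≤ -1`. -/
theorem stmt8 (lam : ℝ) :
    (∀ y0 : ell2, Tendsto (fun t : ℝ => NormedSpace.exp (t • opA lam) y0)
      atTop (nhds 0)) ↔ lam ≤ -1 := by
  refine ⟨fun hstable => ?_, fun hlam => tendsto_exp_smul_opA_apply hlam⟩
  by_contra! hlam
  obtain ⟨y, hy⟩ := exists_not_tendsto_exp_smul_opA_apply hlam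
  exact hy (hstable y)

end
end
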